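/- arXiv:2402.19311 — 2 statements merged into one kernel-verified Lean document; each statement's English description precedes it below -/
import Mathlib

section
/- In the setting of the fundamental moves on configurations n ∈ {0,…,2S}^L (cyclic), for any indices j_1 ≠ j_2 with n_{j_1} > 0 and n_{j_2} < 2S, there exists a composition R_{j_1,j_2} of allowed moves P^{±∓}_j and Q^{±}_j mapping n to the configuration obtained by decreasing n_{j_1} by 1 and increasing n_{j_2} by 1, leaving all other entries unchanged. -/
/-- Move `P⁺⁻_j`: `n_j ↦ n_j + 1`, `n_{j+1} ↦ n_{j+1} − 1` (cyclic), allowed when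
`n_j < 2S` and `n_{j+1} > 0`. -/
def StepPpm (L twoS : ℕ) [NeZero L] (n n' : Fin L → ℕ) : Prop :=
  ∃ j : Fin L, n j < twoS ∧ 0 < n (j + 1) ∧
    n' = Function.update (Function.update n j (n j + 1)) (j + 1) (n (j + 1) - 1)

/-- Move `P⁻⁺_j`: `n_j ↦ n_j − 1`, `n_{j+1} ↦ n_{j+1} + 1` (cyclic), allowed when
`n_j > 0` and `n_{j+1} < 2S`. -/
def StepPmp (L twoS : ℕ) [NeZero L] (n n' : Fin L → ℕ) : Prop :=
  ∃ j : Fin L, 0 < n j ∧ n (j + 1) < twoS ∧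
    n' = Function.update (Function.update n j (n j - 1)) (j + 1) (n (j + 1) + 1)

/-- Move `Q⁺_j`: `n_j ↦ n_j + 2`, allowed when `n_j ≤ 2S − 2`. -/
def StepQp (L twoS : ℕ) [NeZero L] (n n' : Fin L → ℕ) : Prop :=
  ∃ j : Fin L, n j + 2 ≤ twoS ∧ n' = Function.update n j (n j + 2)

/-- Move `Q⁻_j`: `n_j ↦ n_j − 2`, allowed when `n_j ≥ 2`. -/
def StepQm (L twoS : ℕ) [NeZero L] (n n' : Fin L → ℕ) : Prop :=
  ∃ j : Fin L, 2 ≤ n j ∧ n' = Function.update n j (n j - 2)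

/-- One allowed fundamental move. -/
def Step (L twoS : ℕ) [NeZero L] (n n' : Fin L → ℕ) : Prop :=
  StepPpm L twoS n n' ∨ StepPmp L twoS n n' ∨ StepQp L twoS n n' ∨ StepQm L twoS n n'


/-!
A unit is carried from `j₁` to `j₂` along the cycle `j₁ → j₁ + 1 → ⋯ → j₂` using only the
moves `P⁻⁺`. By induction along the path: if the next site `a` has room, first pass the unit
from `j₁` to `a` and then carry it on from `a`; if `a` is full (so `0 < n a`), first carry one
of its units on to `j₂`, which frees room at `a`, and then pass the unit from `j₁` to `a`.
-/

open Relation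

section Transfer

variable {ι : Type*} [DecidableEq ι]

def transferUnit (n : ι → ℕ) (i j : ι) : ι → ℕ :=
  Function.update (Function.update n i (n i - 1)) j (n j + 1)

def TransferStep (adj : ι → ι → Prop) (cap : ℕ) (n n' : ι → ℕ) : Prop :=
  ∃ i j, adj i j ∧ 0 < n i ∧ n j < cap ∧ n' = transferUnit n i j

theorem transferUnit_apply (n : ι → ℕ) (i j k : ι) :
    transferUnit n i j k = if k = j then n j + 1 else if k = i then n i - 1 else n k := by
  simp only [transferUnit, Function.update_apply]

theorem transferUnit_le {cap : ℕ} {n : ι → ℕ} (hn : ∀ k, n k ≤ cap) {i j : ι}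
    (hj : n j < cap) (k : ι) : transferUnit n i j k ≤ cap := by
  rw [transferUnit_apply]
  split_ifs
  · omega
  · exact (Nat.sub_le _ _).trans (hn i)
  · exact hn k

theorem transferUnit_transferUnit {n : ι → ℕ} {i a j : ι} (hia : i ≠ a) (haj : a ≠ j)
    (hij : i ≠ j) : transferUnit (transferUnit n i a) a j = transferUnit n i j := by
  funext k
  simp only [transferUnit_apply]
  split_ifs <;> grind

theorem transferUnit_transferUnit_of_pos {n : ι → ℕ} {i a j : ι} (hia : i ≠ a) (haj : a ≠ j)
    (hij : i ≠ j) (ha : 0 < n a) :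
    transferUnit (transferUnit n a j) i a = transferUnit n i j := by
  funext k
  simp only [transferUnit_apply]
  split_ifs <;> grind

theorem TransferStep.reflTransGen_transferUnit {adj : ι → ι → Prop} {cap : ℕ} {i j : ι}
    (hij : TransGen adj i j) (n : ι → ℕ) (hn : ∀ k, n k ≤ cap) (hne : i ≠ j) (hi : 0 < n i)
    (hj : n j < cap) : ReflTransGen (TransferStep adj cap) n (transferUnit n i j) := by
  induction hij using TransGen.head_induction_on generalizing n with
  | single hadj => exact .single ⟨_, _, hadj, hi, hj, rfl⟩
  | @head i a hia _ ih =>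
    obtain rfl | hai := eq_or_ne a i
    · exact ih n hn hne hi hj
    obtain rfl | haj := eq_or_ne a j
    · exact .single ⟨_, _, hia, hi, hj, rfl⟩
    by_cases ha : n a < cap
    · have hfirst : TransferStep adj cap n (transferUnit n i a) := ⟨_, _, hia, hi, ha, rfl⟩
      have hrest := ih (transferUnit n i a) (transferUnit_le hn ha) haj
        (by simp [transferUnit_apply]) (by simpa [transferUnit_apply, haj.symm, hne.symm])
      rw [transferUnit_transferUnit hai.symm haj hne] at hrest
      exact .head hfirst hrest
    · have ha_pos : 0 < n a := by omega
      have hlast : TransferStep adj cap (transferUnit n a j)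
          (transferUnit (transferUnit n a j) i a) :=
        ⟨_, _, hia, by simpa [transferUnit_apply, hne, hai.symm],
          by simp only [transferUnit_apply, if_neg haj, ↓reduceIte]; have := hn a; omega, rfl⟩
      rw [← transferUnit_transferUnit_of_pos hai.symm haj hne ha_pos]
      exact .tail (ih n hn haj ha_pos hj) hlast

end Transfer

open Fin.NatCast in
theorem Fin.transGen_add_one {L : ℕ} [NeZero L] {i j : Fin L} (hij : i ≠ j) :
    TransGen (fun a b : Fin L => b = a + 1) i j := by
  have hpath (k : ℕ) : ReflTransGen (fun a b : Fin L => b = a + 1) i (i + k) := by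
    induction k with
    | zero => simpa using ReflTransGen.refl
    | succ k ih => exact ih.tail (by rw [Nat.cast_succ, add_assoc])
  have hj : i + ((j - i).val : Fin L) = j := by rw [Fin.cast_val_eq_self, add_sub_cancel]
  obtain h | h := reflTransGen_iff_eq_or_transGen.mp (hj ▸ hpath (j - i).val)
  · exact absurd h.symm hij
  · exact h

theorem step_of_transferStep {L twoS : ℕ} [NeZero L] {n n' : Fin L → ℕ}
    (h : TransferStep (fun a b : Fin L => b = a + 1) twoS n n') : Step L twoS n n' := by
  obtain ⟨i, _, rfl, hi, hj, rfl⟩ := h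
  exact Or.inr (Or.inl ⟨i, hi, hj, rfl⟩)

theorem move_R_exists_general (L twoS : ℕ) [NeZero L]
    (n : Fin L → ℕ) (hn : ∀ j, n j ≤ twoS)
    (j₁ j₂ : Fin L) (hne : j₁ ≠ j₂) (h1 : 0 < n j₁) (h2 : n j₂ < twoS) :
    Relation.ReflTransGen (Step L twoS) n
      (Function.update (Function.update n j₁ (n j₁ - 1)) j₂ (n j₂ + 1)) :=
  ReflTransGen.mono (fun _ _ => step_of_transferStep) _ _
    (TransferStep.reflTransGen_transferUnit (Fin.transGen_add_one hne) n hn hne h1 h2)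

/-- Lemma on `R_{j₁,j₂}`: for `j₁ ≠ j₂` with `n_{j₁} > 0` and
`n_{j₂} < 2S`, some composition of allowed fundamental moves decreases `n_{j₁}`
by 1 and increases `n_{j₂}` by 1, leaving all other entries unchanged. -/
theorem move_R_exists (L twoS : ℕ) [NeZero L] (hL : 2 ≤ L) (hLeven : Even L)
    (hS : 1 ≤ twoS)
    (n : Fin L → ℕ) (hn : ∀ j, n j ≤ twoS)
    (j₁ j₂ : Fin L) (hne : j₁ ≠ j₂) (h1 : 0 < n j₁) (h2 : n j₂ < twoS) :
    Relation.ReflTransGen (Step L twoS) n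
      (Function.update (Function.update n j₁ (n j₁ - 1)) j₂ (n j₂ + 1)) :=
  move_R_exists_general L twoS n hn j₁ j₂ hne h1 h2
end

section
/- Let s^x, s^y, s^z be the spin-1/2 matrices (halves of the Pauli matrices). For Δ ∈ (0,1], set φ = arccos(√((1+Δ)/2)) and U_j(φ) the rotation of the j-th spin about the y-axis by angle (−1)^j φ. Then under the staggered rotation R(φ) = ⊗_j exp(i(−1)^j φ s_j^y), the XYX Hamiltonian H = J̃ ∑_j (s_j^x s_{j+1}^x + Δ s_j^y s_{j+1}^y + s_j^z s_{j+1}^z) − H̃ ∑_j s_j^z with H̃ = J̃√(2(1+Δ)) transforms into J̃ ∑_j [ Δ s_j·s_{j+1} − (1+Δ) s_j^z + (−1)^j √(1−Δ²)(s_j^x s_{j+1}^z − s_j^z s_{j+1}^x − s_j^x) ]. -/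
/-!
The factor `exp(i(-1)^j φ s^y)` of `R(φ)` is the rotation about the `y`-axis by
`θ_j = (-1)^j φ`: conjugation fixes `s_j^y` and rotates `(s_j^x, s_j^z)` by `θ_j`. On a ring of
even length neighbouring sites are rotated in opposite directions, which turns
`s_j^x s_{j+1}^x + s_j^z s_{j+1}^z` into
`cos 2φ (s_j^x s_{j+1}^x + s_j^z s_{j+1}^z)
  + (-1)^j sin 2φ (s_j^x s_{j+1}^z - s_j^z s_{j+1}^x)`.
The choice `cos φ = √((1+Δ)/2)` gives `cos 2φ = Δ`, `sin 2φ = √(1-Δ²)` and `H̃ = 2 J̃ cos φ`,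
so the rotated field `-H̃ (sin θ_j s_j^x + cos θ_j s_j^z)` is
`-J̃ ((-1)^j √(1-Δ²) s_j^x + (1+Δ) s_j^z)`.
-/

open Matrix Complex

noncomputable section

/-- Spin-1/2 matrix `s^x = σ^x/2`. -/
def sx : Matrix (Fin 2) (Fin 2) ℂ := !![0, 1/2; 1/2, 0]
/-- Spin-1/2 matrix `s^y = σ^y/2`. -/
def sy : Matrix (Fin 2) (Fin 2) ℂ := !![0, -I/2; I/2, 0]
/-- Spin-1/2 matrix `s^z = σ^z/2`. -/
def sz : Matrix (Fin 2) (Fin 2) ℂ := !![1/2, 0; 0, -1/2]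

/-- Tensor (Kronecker) product of one `2×2` matrix per site, as a matrix on the
`L`-site Hilbert space indexed by `Fin L → Fin 2`. -/
def kronAll (L : ℕ) (A : Fin L → Matrix (Fin 2) (Fin 2) ℂ) :
    Matrix (Fin L → Fin 2) (Fin L → Fin 2) ℂ :=
  fun x y => ∏ j : Fin L, A j (x j) (y j)

/-- The one-site operator `A` acting on site `j` (identity elsewhere). -/
def onSite (L : ℕ) (j : Fin L) (A : Matrix (Fin 2) (Fin 2) ℂ) :
    Matrix (Fin L → Fin 2) (Fin L → Fin 2) ℂ :=
  kronAll L (fun k => if k = j then A else 1)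

/-- The staggered rotation `R(φ) = ⊗_j exp(i(−1)^j φ s_j^y)`. -/
def Rstag (L : ℕ) (φ : ℝ) : Matrix (Fin L → Fin 2) (Fin L → Fin 2) ℂ :=
  kronAll L (fun j => NormedSpace.exp ((I * (-1 : ℂ) ^ (j : ℕ) * (φ : ℂ)) • sy))

/-- The spin-1/2 XYX chain in a transverse field (periodic boundary conditions):
`H = J̃ ∑_j (s_j^x s_{j+1}^x + Δ s_j^y s_{j+1}^y + s_j^z s_{j+1}^z) − H̃ ∑_j s_j^z`. -/
def Hmap (L : ℕ) [NeZero L] (Jt Δ Ht : ℝ) :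
    Matrix (Fin L → Fin 2) (Fin L → Fin 2) ℂ :=
  (Jt : ℂ) • (∑ j : Fin L,
      (onSite L j sx * onSite L (j + 1) sx
        + (Δ : ℂ) • (onSite L j sy * onSite L (j + 1) sy)
        + onSite L j sz * onSite L (j + 1) sz))
    - (Ht : ℂ) • ∑ j : Fin L, onSite L j sz

lemma two_I_smul_sy_mul_self : ((2 * I) • sy) * ((2 * I) • sy) = -1 := by
  ext i j
  fin_cases i <;> fin_cases j <;> simp [sy, Matrix.mul_apply] <;> ring_nf <;> simp

def yRot (θ : ℝ) : Matrix (Fin 2) (Fin 2) ℂ :=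
  !![(Real.cos (θ / 2) : ℂ), (Real.sin (θ / 2) : ℂ); -(Real.sin (θ / 2) : ℂ),
    (Real.cos (θ / 2) : ℂ)]

/-- `z ↦ re z + im z • 2i s^y` embeds `ℂ` in the 2×2 matrices and maps `exp (iθ/2)` to
`exp ((iθ) s^y)`. -/
lemma exp_I_mul_smul_sy (θ : ℝ) : NormedSpace.exp ((I * θ) • sy) = yRot θ := by
  let _ := Matrix.linftyOpNormedRing (n := Fin 2) (α := ℂ)
  let _ := Matrix.linftyOpNormedAlgebra (n := Fin 2) (α := ℂ) (R := ℝ)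
  let f := Complex.liftAux _ two_I_smul_sy_mul_self
  have hf : (I * θ) • sy = f ((θ / 2 : ℝ) * I) := by
    ext i j
    fin_cases i <;> fin_cases j <;> simp [f, sy] <;> ring
  rw [hf]
  refine (NormedSpace.map_exp f f.toLinearMap.continuous_of_finiteDimensional _).symm.trans ?_
  rw [← Complex.exp_eq_exp_ℂ, Complex.liftAux_apply, Complex.exp_ofReal_mul_I_re,
    Complex.exp_ofReal_mul_I_im]
  ext i j
  fin_cases i <;> fin_cases j <;> simp [yRot, sy, Algebra.algebraMap_eq_smul_one] <;> ring_nf <;>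
    simp

lemma yRot_mul_yRot_neg (θ : ℝ) : yRot θ * yRot (-θ) = 1 := by
  have h : (Real.sin (θ / 2) : ℂ) ^ 2 + (Real.cos (θ / 2) : ℂ) ^ 2 = 1 := by
    exact_mod_cast Real.sin_sq_add_cos_sq _
  simp only [yRot, neg_div, Real.cos_neg, Real.sin_neg, Complex.ofReal_neg]
  generalize (Real.sin (θ / 2) : ℂ) = s, (Real.cos (θ / 2) : ℂ) = c at h ⊢
  ext i j
  fin_cases i <;> fin_cases j <;> simp [Matrix.mul_apply] <;> grind

lemma yRot_neg_mul_yRot (θ : ℝ) : yRot (-θ) * yRot θ = 1 := by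
  simpa using yRot_mul_yRot_neg (-θ)

lemma yRot_neg_mul_sx_mul_yRot (θ : ℝ) :
    yRot (-θ) * sx * yRot θ = (Real.cos θ : ℂ) • sx - (Real.sin θ : ℂ) • sz := by
  obtain ⟨t, rfl⟩ : ∃ t, θ = 2 * t := ⟨θ / 2, by ring⟩
  simp only [yRot, neg_div, Real.cos_neg, Real.sin_neg, Real.cos_two_mul', Real.sin_two_mul]
  push_cast
  generalize (Real.sin t : ℂ) = s, (Real.cos t : ℂ) = c
  ext i j
  fin_cases i <;> fin_cases j <;> simp [sx, sz, Matrix.mul_apply] <;> ring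

lemma yRot_neg_mul_sy_mul_yRot (θ : ℝ) : yRot (-θ) * sy * yRot θ = sy := by
  have h : (Real.sin (θ / 2) : ℂ) ^ 2 + (Real.cos (θ / 2) : ℂ) ^ 2 = 1 := by
    exact_mod_cast Real.sin_sq_add_cos_sq _
  simp only [yRot, neg_div, Real.cos_neg, Real.sin_neg, Complex.ofReal_neg]
  generalize (Real.sin (θ / 2) : ℂ) = s, (Real.cos (θ / 2) : ℂ) = c at h ⊢
  ext i j
  fin_cases i <;> fin_cases j <;> simp [sy, Matrix.mul_apply] <;> grind

lemma yRot_neg_mul_sz_mul_yRot (θ : ℝ) :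
    yRot (-θ) * sz * yRot θ = (Real.sin θ : ℂ) • sx + (Real.cos θ : ℂ) • sz := by
  obtain ⟨t, rfl⟩ : ∃ t, θ = 2 * t := ⟨θ / 2, by ring⟩
  simp only [yRot, neg_div, Real.cos_neg, Real.sin_neg, Real.cos_two_mul', Real.sin_two_mul]
  push_cast
  generalize (Real.sin t : ℂ) = s, (Real.cos t : ℂ) = c
  ext i j
  fin_cases i <;> fin_cases j <;> simp [sx, sz, Matrix.mul_apply] <;> ring

section Tensor

variable {L : ℕ}

lemma kronAll_mul (A B : Fin L → Matrix (Fin 2) (Fin 2) ℂ) :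
    kronAll L A * kronAll L B = kronAll L (fun j => A j * B j) := by
  ext x y
  change ∑ z : Fin L → Fin 2, (∏ j, A j (x j) (z j)) * (∏ j, B j (z j) (y j))
      = ∏ j, (A j * B j) (x j) (y j)
  simp only [Matrix.mul_apply, Finset.prod_univ_sum, Fintype.piFinset_univ,
    Finset.prod_mul_distrib]

lemma kronAll_one : kronAll L (fun _ => (1 : Matrix (Fin 2) (Fin 2) ℂ)) = 1 := by
  ext x y
  change (∏ j : Fin L, (1 : Matrix (Fin 2) (Fin 2) ℂ) (x j) (y j)) = (1 : Matrix _ _ ℂ) x y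
  by_cases h : x = y
  · subst h
    simp
  · obtain ⟨j, hj⟩ := Function.ne_iff.mp h
    rw [Matrix.one_apply_ne h]
    exact Finset.prod_eq_zero (Finset.mem_univ j) (Matrix.one_apply_ne hj)

lemma kronAll_mul_kronAll_eq_one {A B : Fin L → Matrix (Fin 2) (Fin 2) ℂ}
    (h : ∀ j, A j * B j = 1) : kronAll L A * kronAll L B = 1 := by
  simp only [kronAll_mul, h, kronAll_one]

lemma onSite_apply (j : Fin L) (A : Matrix (Fin 2) (Fin 2) ℂ) (x y : Fin L → Fin 2) :
    onSite L j A x y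
      = A (x j) (y j)
        * ∏ k ∈ Finset.univ.erase j, (1 : Matrix (Fin 2) (Fin 2) ℂ) (x k) (y k) := by
  change (∏ k : Fin L, (if k = j then A else 1) (x k) (y k)) = _
  rw [← Finset.mul_prod_erase _ _ (Finset.mem_univ j), if_pos rfl]
  congr 1
  exact Finset.prod_congr rfl fun k hk => by rw [if_neg (Finset.ne_of_mem_erase hk)]

lemma onSite_add (j : Fin L) (A B : Matrix (Fin 2) (Fin 2) ℂ) :
    onSite L j (A + B) = onSite L j A + onSite L j B := by
  ext x y
  simp only [onSite_apply, Matrix.add_apply, add_mul]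

lemma onSite_sub (j : Fin L) (A B : Matrix (Fin 2) (Fin 2) ℂ) :
    onSite L j (A - B) = onSite L j A - onSite L j B := by
  ext x y
  simp only [onSite_apply, Matrix.sub_apply, sub_mul]

lemma onSite_smul (j : Fin L) (a : ℂ) (A : Matrix (Fin 2) (Fin 2) ℂ) :
    onSite L j (a • A) = a • onSite L j A := by
  ext x y
  simp only [onSite_apply, Matrix.smul_apply, smul_eq_mul, mul_assoc]

lemma kronAll_mul_onSite_mul_kronAll {A B : Fin L → Matrix (Fin 2) (Fin 2) ℂ}
    (h : ∀ k, B k * A k = 1) (j : Fin L) (M : Matrix (Fin 2) (Fin 2) ℂ) :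
    kronAll L B * onSite L j M * kronAll L A = onSite L j (B j * M * A j) := by
  unfold onSite
  rw [kronAll_mul, kronAll_mul]
  congr 1
  funext k
  by_cases hk : k = j
  · subst hk
    simp
  · simp [hk, h k]

end Tensor

lemma Real.cos_neg_one_pow_mul (n : ℕ) (x : ℝ) : Real.cos ((-1) ^ n * x) = Real.cos x := by
  rcases neg_one_pow_eq_or ℝ n with h | h <;> simp [h]

lemma Real.sin_neg_one_pow_mul (n : ℕ) (x : ℝ) :
    Real.sin ((-1) ^ n * x) = (-1) ^ n * Real.sin x := by
  rcases neg_one_pow_eq_or ℝ n with h | h <;> simp [h]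

lemma neg_one_pow_val_add_one {R : Type*} [Ring R] {L : ℕ} [NeZero L]
    (hL : Even L) (j : Fin L) : (-1 : R) ^ ((j + 1 : Fin L) : ℕ) = -(-1) ^ (j : ℕ) := by
  rw [neg_one_pow_eq_pow_mod_two, Fin.val_add, Nat.mod_mod_of_dvd _ hL.two_dvd, Fin.val_one',
    Nat.add_mod, Nat.mod_mod_of_dvd _ hL.two_dvd, ← Nat.add_mod, ← neg_one_pow_eq_pow_mod_two,
    pow_succ, mul_neg_one]

section Staggered

variable (L : ℕ) (φ : ℝ)

lemma Rstag_eq_kronAll_yRot : Rstag L φ = kronAll L (fun j => yRot ((-1) ^ (j : ℕ) * φ)) := by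
  unfold Rstag
  congr 1
  funext j
  rw [← exp_I_mul_smul_sy]
  push_cast
  ring_nf

lemma Rstag_mul_kronAll_yRot_neg :
    Rstag L φ * kronAll L (fun j => yRot (-((-1) ^ (j : ℕ) * φ))) = 1 := by
  rw [Rstag_eq_kronAll_yRot]
  exact kronAll_mul_kronAll_eq_one fun j => yRot_mul_yRot_neg _

lemma isUnit_Rstag : IsUnit (Rstag L φ) :=
  (Matrix.isUnit_iff_isUnit_det _).mpr
    (Matrix.isUnit_det_of_right_inverse (Rstag_mul_kronAll_yRot_neg L φ))

lemma inv_Rstag_mul_onSite_mul_Rstag (j : Fin L) (M : Matrix (Fin 2) (Fin 2) ℂ) :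
    (Rstag L φ)⁻¹ * onSite L j M * Rstag L φ
      = onSite L j (yRot (-((-1) ^ (j : ℕ) * φ)) * M * yRot ((-1) ^ (j : ℕ) * φ)) := by
  rw [Matrix.inv_eq_right_inv (Rstag_mul_kronAll_yRot_neg L φ), Rstag_eq_kronAll_yRot]
  exact kronAll_mul_onSite_mul_kronAll (fun k => yRot_neg_mul_yRot _) j M

lemma inv_Rstag_mul_onSite_sx_mul_Rstag (j : Fin L) :
    (Rstag L φ)⁻¹ * onSite L j sx * Rstag L φ
      = (Real.cos φ : ℂ) • onSite L j sx
        - ((-1 : ℂ) ^ (j : ℕ) * (Real.sin φ : ℂ)) • onSite L j sz := by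
  rw [inv_Rstag_mul_onSite_mul_Rstag, yRot_neg_mul_sx_mul_yRot, onSite_sub, onSite_smul,
    onSite_smul, Real.cos_neg_one_pow_mul, Real.sin_neg_one_pow_mul]
  push_cast
  rfl

lemma inv_Rstag_mul_onSite_sy_mul_Rstag (j : Fin L) :
    (Rstag L φ)⁻¹ * onSite L j sy * Rstag L φ = onSite L j sy := by
  rw [inv_Rstag_mul_onSite_mul_Rstag, yRot_neg_mul_sy_mul_yRot]

lemma inv_Rstag_mul_onSite_sz_mul_Rstag (j : Fin L) :
    (Rstag L φ)⁻¹ * onSite L j sz * Rstag L φ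
      = ((-1 : ℂ) ^ (j : ℕ) * (Real.sin φ : ℂ)) • onSite L j sx
        + (Real.cos φ : ℂ) • onSite L j sz := by
  rw [inv_Rstag_mul_onSite_mul_Rstag, yRot_neg_mul_sz_mul_yRot, onSite_add, onSite_smul,
    onSite_smul, Real.cos_neg_one_pow_mul, Real.sin_neg_one_pow_mul]
  push_cast
  rfl

end Staggered

section Bond

variable {R A : Type*} [CommRing R] [Ring A] [Algebra R A]

lemma rotated_xz_bond (c s : R) (X Z X' Z' : A) :
    (c • X - s • Z) * (c • X' + s • Z') + (s • X + c • Z) * (-s • X' + c • Z')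
      = (c ^ 2 - s ^ 2) • (X * X' + Z * Z') + (2 * c * s) • (X * Z' - Z * X') := by
  simp only [mul_add, add_mul, sub_mul, smul_mul_smul_comm]
  module

lemma rotated_bond_sub_field {X Y Z X' Y' Z' : A} {jt h d r c s e : R}
    (he : e ^ 2 = 1) (hcs : c ^ 2 + s ^ 2 = 1)
    (hd : c ^ 2 - s ^ 2 = d) (hr : 2 * c * s = r) (hh : h = 2 * c) :
    jt • ((c • X - (e * s) • Z) * (c • X' - (-e * s) • Z') + d • (Y * Y')
        + ((e * s) • X + c • Z) * ((-e * s) • X' + c • Z'))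
      - (jt * h) • ((e * s) • X + c • Z)
    = jt • (d • (X * X' + Y * Y' + Z * Z') - (1 + d) • Z
        + e • r • (X * Z' - Z * X' - X)) := by
  subst hd hr hh
  rw [neg_mul, neg_smul, sub_neg_eq_add, add_right_comm, rotated_xz_bond, mul_pow, he, one_mul]
  linear_combination (norm := module) -(jt • hcs • Z)

end Bond

section ClassicalLine

variable {Δ : ℝ}

lemma cos_arccos_sqrt_half (h₁ : Δ ≤ 1) :
    Real.cos (Real.arccos √((1 + Δ) / 2)) = √((1 + Δ) / 2) :=
  Real.cos_arccos (by linarith [Real.sqrt_nonneg ((1 + Δ) / 2)])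
    (Real.sqrt_le_one.mpr (by linarith))

lemma sin_arccos_sqrt_half (h₀ : -1 ≤ Δ) :
    Real.sin (Real.arccos √((1 + Δ) / 2)) = √((1 - Δ) / 2) := by
  rw [Real.sin_arccos, Real.sq_sqrt (by linarith)]
  ring_nf

lemma cos_sq_sub_sin_sq_arccos_sqrt_half (h₀ : -1 ≤ Δ) (h₁ : Δ ≤ 1) :
    Real.cos (Real.arccos √((1 + Δ) / 2)) ^ 2 - Real.sin (Real.arccos √((1 + Δ) / 2)) ^ 2
      = Δ := by
  rw [cos_arccos_sqrt_half h₁, sin_arccos_sqrt_half h₀, Real.sq_sqrt (by linarith),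
    Real.sq_sqrt (by linarith)]
  ring

lemma two_mul_cos_mul_sin_arccos_sqrt_half (h₀ : -1 ≤ Δ) (h₁ : Δ ≤ 1) :
    2 * Real.cos (Real.arccos √((1 + Δ) / 2)) * Real.sin (Real.arccos √((1 + Δ) / 2))
      = √(1 - Δ ^ 2) := by
  rw [cos_arccos_sqrt_half h₁, sin_arccos_sqrt_half h₀, mul_assoc,
    ← Real.sqrt_mul (by linarith), ← Real.sqrt_sq (zero_le_two : (0 : ℝ) ≤ 2),
    ← Real.sqrt_mul (by norm_num)]
  ring_nf

lemma sqrt_two_mul_one_add_eq_two_mul_cos_arccos (h₁ : Δ ≤ 1) :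
    √(2 * (1 + Δ)) = 2 * Real.cos (Real.arccos √((1 + Δ) / 2)) := by
  rw [cos_arccos_sqrt_half h₁, ← Real.sqrt_sq (zero_le_two : (0 : ℝ) ≤ 2),
    ← Real.sqrt_mul (by norm_num)]
  ring_nf

end ClassicalLine

theorem xyx_classical_line_rotation_general (L : ℕ) [NeZero L] (hLeven : Even L)
    (Jt Δ : ℝ) (hΔ0 : 0 < Δ) (hΔ1 : Δ ≤ 1)
    (φ : ℝ) (hφ : φ = Real.arccos (Real.sqrt ((1 + Δ) / 2))) :
    (Rstag L φ)⁻¹ * Hmap L Jt Δ (Jt * Real.sqrt (2 * (1 + Δ))) * Rstag L φ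
      = (Jt : ℂ) • ∑ j : Fin L,
          ((Δ : ℂ) • (onSite L j sx * onSite L (j + 1) sx
              + onSite L j sy * onSite L (j + 1) sy
              + onSite L j sz * onSite L (j + 1) sz)
            - ((1 : ℂ) + (Δ : ℂ)) • onSite L j sz
            + (-1 : ℂ) ^ (j : ℕ) • ((Real.sqrt (1 - Δ ^ 2) : ℝ) : ℂ) •
                (onSite L j sx * onSite L (j + 1) sz
                  - onSite L j sz * onSite L (j + 1) sx
                  - onSite L j sx)) := by
  have hΔ : -1 ≤ Δ := by linarith
  have hcs : (Real.cos φ : ℂ) ^ 2 + (Real.sin φ : ℂ) ^ 2 = 1 := by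
    exact_mod_cast Real.cos_sq_add_sin_sq φ
  have hd : (Real.cos φ : ℂ) ^ 2 - (Real.sin φ : ℂ) ^ 2 = Δ := by
    exact_mod_cast hφ ▸ cos_sq_sub_sin_sq_arccos_sqrt_half hΔ hΔ1
  have hr : 2 * (Real.cos φ : ℂ) * (Real.sin φ : ℂ) = (√(1 - Δ ^ 2) : ℝ) := by
    exact_mod_cast hφ ▸ two_mul_cos_mul_sin_arccos_sqrt_half hΔ hΔ1
  have hh : (√(2 * (1 + Δ)) : ℂ) = 2 * (Real.cos φ : ℂ) := by
    exact_mod_cast hφ ▸ sqrt_two_mul_one_add_eq_two_mul_cos_arccos hΔ1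
  -- conjugation by `Rstag L φ` is an algebra automorphism, so it distributes over `Hmap`
  obtain ⟨u, hu⟩ := isUnit_Rstag L φ
  let σ := MulSemiringAction.toAlgEquiv ℂ (Matrix (Fin L → Fin 2) (Fin L → Fin 2) ℂ)
    (ConjAct.toConjAct u⁻¹)
  have hσ : ∀ X, (Rstag L φ)⁻¹ * X * Rstag L φ = σ X := fun X => by
    rw [← hu, ← Matrix.coe_units_inv]
    rfl
  rw [hσ]
  simp only [Hmap, map_sub, map_smul, map_sum, map_add, map_mul]
  simp only [← hσ, inv_Rstag_mul_onSite_sx_mul_Rstag, inv_Rstag_mul_onSite_sy_mul_Rstag,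
    inv_Rstag_mul_onSite_sz_mul_Rstag, neg_one_pow_val_add_one hLeven, Complex.ofReal_mul,
    Finset.smul_sum, ← Finset.sum_sub_distrib]
  refine Finset.sum_congr rfl fun j _ => ?_
  have he : ((-1 : ℂ) ^ (j : ℕ)) ^ 2 = 1 := by
    rw [← pow_mul, mul_comm, pow_mul, neg_one_sq, one_pow]
  exact rotated_bond_sub_field he hcs hd hr hh

/-- on the classical line `H̃ = J̃√(2(1+Δ))` with
`φ = arccos(√((1+Δ)/2))`, the staggered rotation transforms the XYX Hamiltonian as
`R(φ)⁻¹ H R(φ) = J̃ ∑_j [Δ s_j·s_{j+1} − (1+Δ)s_j^z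
  + (−1)^j √(1−Δ²)(s_j^x s_{j+1}^z − s_j^z s_{j+1}^x − s_j^x)]`. -/
theorem xyx_classical_line_rotation (L : ℕ) [NeZero L] (hLeven : Even L)
    (Jt Δ : ℝ) (hJ : 0 < Jt) (hΔ0 : 0 < Δ) (hΔ1 : Δ ≤ 1)
    (φ : ℝ) (hφ : φ = Real.arccos (Real.sqrt ((1 + Δ) / 2))) :
    (Rstag L φ)⁻¹ * Hmap L Jt Δ (Jt * Real.sqrt (2 * (1 + Δ))) * Rstag L φ
      = (Jt : ℂ) • ∑ j : Fin L,
          ((Δ : ℂ) • (onSite L j sx * onSite L (j + 1) sx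
              + onSite L j sy * onSite L (j + 1) sy
              + onSite L j sz * onSite L (j + 1) sz)
            - ((1 : ℂ) + (Δ : ℂ)) • onSite L j sz
            + (-1 : ℂ) ^ (j : ℕ) • ((Real.sqrt (1 - Δ ^ 2) : ℝ) : ℂ) •
                (onSite L j sx * onSite L (j + 1) sz
                  - onSite L j sz * onSite L (j + 1) sx
                  - onSite L j sx)) :=
  xyx_classical_line_rotation_general L hLeven Jt Δ hΔ0 hΔ1 φ hφ

end
end
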